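/- For any complex numbers α, β with Re(α) < 1 and Re(β) < 1, and nonnegative integer m, define ζ^{(α)}(m+1; 1-β) = Σ_{n≥1} C(n+α-2, n-1)/(n-β)^{m+1}. Then ζ^{(α)}(m+1; 1-β) = (1/m!) · (∂^m/∂β^m) B(1-α, 1-β), and in particular ζ^{(α)}(2; 1-β) = −B(1-α, 1-β)·(ψ(1-β) − ψ(2-α-β)). -/

import Mathlib

/-- Pochhammer symbol `(α)_n`. -/
noncomputable def poch (α : ℂ) (n : ℕ) : ℂ := ∏ i ∈ Finset.range n, (α + i)

/-- Beta function `B(a,b) = Γ(a)Γ(b)/Γ(a+b)`. -/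
noncomputable def cBeta (a b : ℂ) : ℂ :=
  Complex.Gamma a * Complex.Gamma b / Complex.Gamma (a + b)

/-- Digamma function `ψ(z) = Γ′(z)/Γ(z)`. -/
noncomputable def psiC (z : ℂ) : ℂ := deriv Complex.Gamma z / Complex.Gamma z

/-- `ζ^{(α)}(m+1; 1-β) = Σ_{n ≥ 1} C(n+α-2, n-1)/(n-β)^{m+1}`,
with `C(n+α-2,n-1) = (α)_{n-1}/(n-1)!`, indexed by `n = n'+1`. -/
noncomputable def zetaDepthOne (α β : ℂ) (m : ℕ) : ℂ :=
  ∑' n : ℕ, (poch α n / (n.factorial : ℂ)) / (((n : ℂ) + 1) - β) ^ (m + 1)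

/-!
The coefficients `(α)ₙ / n!` are those of the binomial series `(1 - x)^(-α)`, and Euler's limit
formula for `Γ` shows `(α)ₙ / n! = O(n^(Re α - 1))`. Since `Re α < 1`, the series
`∑ (α)ₙ / n! · x^(n - β)` may be integrated termwise over `(0, 1)`, which gives
`B(1 - α, 1 - β) = ∑ (α)ₙ / n! / (n + 1 - β)`, the case `m = 0`. The same bound, uniform on
half-planes `Re β < c < 1`, allows termwise differentiation in `β`; each derivative raises the
exponent of `n + 1 - β` by one and contributes the factor `k + 1`. For `m = 1` the derivative of
`Γ(1 - α) Γ(1 - β) / Γ(2 - α - β)` is computed directly and expressed through `ψ = Γ' / Γ`.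
-/

open Complex Filter Asymptotics Topology MeasureTheory Set
open scoped Nat

theorem poch_succ (α : ℂ) (n : ℕ) : poch α (n + 1) = poch α n * (α + n) :=
  Finset.prod_range_succ _ _

theorem poch_eq_ascPochhammer_eval (α : ℂ) (n : ℕ) :
    poch α n = (ascPochhammer ℂ n).eval α := by
  induction n with
  | zero => simp [poch]
  | succ n ih => rw [poch_succ, ih, ascPochhammer_succ_eval]

theorem choose_add_sub_one_eq_poch_div_factorial (α : ℂ) (n : ℕ) :
    Ring.choose (α + n - 1) n = poch α n / n ! := by
  rw [← Ring.multichoose_eq, eq_div_iff (Nat.cast_ne_zero.mpr n.factorial_ne_zero), mul_comm,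
    ← nsmul_eq_mul, Ring.factorial_nsmul_multichoose_eq_ascPochhammer,
    Polynomial.ascPochhammer_smeval_eq_eval, poch_eq_ascPochhammer_eval]

theorem hasSum_poch_div_factorial_mul_pow (α : ℂ) {x : ℂ} (hx : ‖x‖ < 1) :
    HasSum (fun n : ℕ => poch α n / n ! * x ^ n) (1 / (1 - x) ^ α) := by
  have := (one_div_one_sub_cpow_hasFPowerSeriesOnBall_zero α).hasSum
    (y := x) (by simpa [← ofReal_norm] using hx)
  simpa [FormalMultilinearSeries.ofScalars_apply_eq, choose_add_sub_one_eq_poch_div_factorial,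
    mul_comm] using this

theorem poch_div_factorial_eq_cpow_mul_div_GammaSeq (α : ℂ) {n : ℕ} (hn : n ≠ 0)
    (hα : poch α (n + 1) ≠ 0) :
    poch α n / n ! = (n : ℂ) ^ (α - 1) * (n / (n + α)) / GammaSeq α n := by
  have hαn : α + n ≠ 0 := by rintro h; simp [poch_succ, h] at hα
  have hpow : (n : ℂ) ^ α ≠ 0 := by simp [hn]
  rw [GammaSeq, ← poch, poch_succ] at *
  rw [cpow_sub _ _ (by exact_mod_cast hn), cpow_one, add_comm (n : ℂ)]
  field_simp

theorem poch_div_factorial_isBigO (α : ℂ) :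
    (fun n : ℕ => poch α n / n !) =O[atTop] fun n : ℕ => (n : ℝ) ^ (α.re - 1) := by
  by_cases hα : ∃ m : ℕ, α = -m
  · obtain ⟨m, rfl⟩ := hα
    refine (isBigO_zero _ _).congr' ?_ EventuallyEq.rfl
    filter_upwards [eventually_gt_atTop m] with n hn
    rw [poch, Finset.prod_eq_zero (Finset.mem_range.2 hn) (by ring), zero_div]
  push Not at hα
  have hpoch (n : ℕ) : poch α n ≠ 0 :=
    Finset.prod_ne_zero_iff.2 fun i _ h => hα i (by linear_combination h)
  have hpow : (fun n : ℕ => (n : ℂ) ^ (α - 1)) =O[atTop]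
      fun n : ℕ => (n : ℝ) ^ (α.re - 1) := by
    refine .of_bound 1 ?_
    filter_upwards [eventually_ne_atTop 0] with n hn
    simp [norm_natCast_cpow_of_pos (Nat.pos_of_ne_zero hn), le_abs_self]
  have hbdd : (fun n : ℕ => (n / (n + α) : ℂ) / GammaSeq α n) =O[atTop] fun _ => (1 : ℝ) :=
    ((tendsto_natCast_div_add_atTop α).div (GammaSeq_tendsto_Gamma α)
      (Gamma_ne_zero hα)).isBigO_one ℝ
  refine (hpow.mul hbdd).congr' ?_ (by simp)
  filter_upwards [eventually_ne_atTop 0] with n hn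
  rw [poch_div_factorial_eq_cpow_mul_div_GammaSeq α hn (hpoch _), mul_div_assoc]

theorem summable_norm_poch_div_factorial_div_pow {α : ℂ} (hα : α.re < 1) {c : ℝ} (hc : c < 1)
    {j : ℕ} (hj : j ≠ 0) :
    Summable fun n : ℕ => ‖poch α n / (n ! : ℂ)‖ / ((n : ℝ) + 1 - c) ^ j := by
  have hden : (fun n : ℕ => (((n : ℝ) + 1 - c) ^ j)⁻¹) =O[atTop]
      fun n : ℕ => (n : ℝ) ^ (-1 : ℝ) := by
    refine .of_bound 1 ?_
    filter_upwards [eventually_ge_atTop 1] with n hn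
    have hn1 : (1 : ℝ) ≤ n := by exact_mod_cast hn
    have hle : (n : ℝ) ≤ ((n : ℝ) + 1 - c) ^ j :=
      (by linarith : (n : ℝ) ≤ n + 1 - c).trans (le_self_pow₀ (by linarith) hj)
    rw [Real.rpow_neg_one, one_mul, norm_inv, norm_inv, Real.norm_of_nonneg (by linarith),
      Real.norm_of_nonneg (by positivity)]
    exact inv_anti₀ (by positivity) hle
  refine summable_of_isBigO_nat (Real.summable_nat_rpow.2 (by linarith : α.re - 2 < -1)) ?_
  refine ((poch_div_factorial_isBigO α).norm_left.mul hden).congr' (by simp [div_eq_mul_inv]) ?_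
  filter_upwards [eventually_ne_atTop 0] with n hn
  rw [← Real.rpow_add (by positivity)]
  ring_nf

theorem re_one_sub_pos {z : ℂ} (hz : z.re < 1) : 0 < (1 - z).re := by
  simpa only [sub_re, one_re, sub_pos] using hz

theorem cBeta_comm (u v : ℂ) : cBeta u v = cBeta v u := by
  rw [cBeta, cBeta, mul_comm, add_comm]

theorem cBeta_eq_betaIntegral {u v : ℂ} (hu : 0 < u.re) (hv : 0 < v.re) :
    cBeta u v = betaIntegral u v := by
  rw [cBeta, Gamma_mul_Gamma_eq_betaIntegral hu hv,
    mul_div_cancel_left₀ _ (Gamma_ne_zero_of_re_pos (by rw [add_re]; positivity))]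

theorem integral_Ioo_zero_one_cpow {r : ℂ} (hr : -1 < r.re) :
    ∫ x in Ioo (0 : ℝ) 1, (x : ℂ) ^ r = 1 / (r + 1) := by
  have hr1 : r + 1 ≠ 0 := ne_zero_of_re_pos (by simp only [add_re, one_re]; linarith)
  rw [← integral_Ioc_eq_integral_Ioo, ← intervalIntegral.integral_of_le zero_le_one,
    integral_cpow (Or.inl hr)]
  simp [zero_cpow hr1]

theorem integral_Ioo_zero_one_norm_cpow {r : ℂ} (hr : -1 < r.re) :
    ∫ x in Ioo (0 : ℝ) 1, ‖(x : ℂ) ^ r‖ = 1 / (r.re + 1) := by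
  rw [setIntegral_congr_fun measurableSet_Ioo fun x hx => norm_cpow_eq_rpow_re_of_pos hx.1 r,
    ← integral_Ioc_eq_integral_Ioo, ← intervalIntegral.integral_of_le zero_le_one,
    integral_rpow (Or.inl hr)]
  simp [Real.zero_rpow (by linarith : r.re + 1 ≠ 0)]

theorem hasSum_poch_div_factorial_div_eq_cBeta {α b : ℂ} (hα : α.re < 1) (hb : b.re < 1) :
    HasSum (fun n : ℕ => poch α n / n ! / ((n : ℂ) + 1 - b)) (cBeta (1 - α) (1 - b)) := by
  set F : ℕ → ℝ → ℂ := fun n x => poch α n / n ! * (x : ℂ) ^ ((n : ℂ) - b)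
  have hre (n : ℕ) : -1 < ((n : ℂ) - b).re := by
    simp only [sub_re, natCast_re, neg_lt_sub_iff_lt_add]
    linarith [n.cast_nonneg (α := ℝ)]
  have hintegral (n : ℕ) :
      ∫ x in Ioo (0 : ℝ) 1, F n x = poch α n / n ! / ((n : ℂ) + 1 - b) := by
    rw [integral_const_mul, integral_Ioo_zero_one_cpow (hre n)]
    ring_nf
  have hnorm (n : ℕ) :
      ∫ x in Ioo (0 : ℝ) 1, ‖F n x‖ =
        ‖poch α n / (n ! : ℂ)‖ / ((n : ℝ) + 1 - b.re) := by
    simp only [F, norm_mul, integral_const_mul, integral_Ioo_zero_one_norm_cpow (hre n)]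
    simp only [Complex.norm_div, RCLike.norm_natCast, sub_re, natCast_re, one_div]
    ring
  have htsum : ∀ x ∈ Ioo (0 : ℝ) 1,
      ∑' n, F n x = (x : ℂ) ^ (1 - b - 1) * (1 - (x : ℂ)) ^ (1 - α - 1) := by
    intro x hx
    have hx0 : (x : ℂ) ≠ 0 := by exact_mod_cast hx.1.ne'
    have hx1 : ‖(x : ℂ)‖ < 1 := by simp [abs_of_pos hx.1, hx.2]
    have hsum := (hasSum_poch_div_factorial_mul_pow α hx1).div_const ((x : ℂ) ^ b)
    rw [sub_sub_cancel_left, sub_sub_cancel_left, cpow_neg, cpow_neg]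
    simp only [F, cpow_sub _ _ hx0, cpow_natCast, ← mul_div_assoc, hsum.tsum_eq]
    ring
  have hF := hasSum_integral_of_summable_integral_norm (μ := volume.restrict (Ioo (0 : ℝ) 1))
    (F := F) (fun n => ((intervalIntegral.integrableOn_Ioo_cpow_iff one_pos).2 (hre n)).const_mul _)
    (by simpa only [hnorm, pow_one] using
      summable_norm_poch_div_factorial_div_pow hα hb one_ne_zero)
  rwa [funext hintegral, setIntegral_congr_fun measurableSet_Ioo htsum,
    ← integral_Ioc_eq_integral_Ioo, ← intervalIntegral.integral_of_le zero_le_one,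
    ← betaIntegral,
    ← cBeta_eq_betaIntegral (re_one_sub_pos hb) (re_one_sub_pos hα), cBeta_comm] at hF

theorem hasDerivAt_div_sub_pow (x : ℂ) {z y : ℂ} (h : z - y ≠ 0) (k : ℕ) :
    HasDerivAt (fun w => x / (z - w) ^ (k + 1)) ((k + 1) * (x / (z - y) ^ (k + 2))) y := by
  refine ((hasDerivAt_const y x).div (((hasDerivAt_id' y).const_sub z).fun_pow (k + 1))
    (pow_ne_zero _ h)).congr_deriv ?_
  field_simp
  push_cast
  ring

theorem norm_div_natCast_add_one_sub_pow_le {c : ℝ} (hc : c < 1) {y : ℂ} (hy : y.re ≤ c)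
    (x : ℂ) (n j : ℕ) :
    ‖x / ((n : ℂ) + 1 - y) ^ j‖ ≤ ‖x‖ / ((n : ℝ) + 1 - c) ^ j := by
  have hpos : 0 < (n : ℝ) + 1 - c := by linarith [n.cast_nonneg (α := ℝ)]
  have hre : (n : ℝ) + 1 - c ≤ ((n : ℂ) + 1 - y).re := by
    simp only [sub_re, add_re, natCast_re, one_re]
    linarith
  have hle : (n : ℝ) + 1 - c ≤ ‖(n : ℂ) + 1 - y‖ := hre.trans (re_le_norm _)
  rw [norm_div, norm_pow]
  exact div_le_div_of_nonneg_left (norm_nonneg _) (by positivity) (pow_le_pow_left₀ hpos.le hle _)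

theorem hasDerivAt_zetaDepthOne {α b : ℂ} (hα : α.re < 1) (hb : b.re < 1) (k : ℕ) :
    HasDerivAt (fun y => zetaDepthOne α y k) ((k + 1) * zetaDepthOne α b (k + 1)) b := by
  obtain ⟨c, hbc, hc⟩ := exists_between hb
  set t : Set ℂ := {y | y.re < c}
  have hbt : b ∈ t := hbc
  have hderiv (n : ℕ) (y : ℂ) (hy : y ∈ t) :
      HasDerivAt (fun w => poch α n / n ! / ((n : ℂ) + 1 - w) ^ (k + 1))
        ((k + 1) * (poch α n / n ! / ((n : ℂ) + 1 - y) ^ (k + 2))) y := by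
    refine hasDerivAt_div_sub_pow _ (ne_zero_of_re_pos ?_) k
    simp only [sub_re, add_re, natCast_re, one_re, sub_pos]
    linarith [hy.out, n.cast_nonneg (α := ℝ)]
  have hbound (n : ℕ) (y : ℂ) (hy : y ∈ t) :
      ‖(k + 1 : ℂ) * (poch α n / n ! / ((n : ℂ) + 1 - y) ^ (k + 2))‖
        ≤ (k + 1) * (‖poch α n / (n ! : ℂ)‖ / ((n : ℝ) + 1 - c) ^ (k + 2)) := by
    rw [norm_mul]
    exact mul_le_mul (by norm_cast) (norm_div_natCast_add_one_sub_pow_le hc hy.out.le _ _ _)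
      (norm_nonneg _) (by positivity)
  have hsummable : Summable fun n : ℕ => poch α n / n ! / ((n : ℂ) + 1 - b) ^ (k + 1) :=
    .of_norm_bounded (summable_norm_poch_div_factorial_div_pow hα hc k.succ_ne_zero)
      fun n => norm_div_natCast_add_one_sub_pow_le hc hbt.out.le _ _ _
  refine (hasDerivAt_tsum_of_isPreconnected
    ((summable_norm_poch_div_factorial_div_pow hα hc (k + 1).succ_ne_zero).mul_left _)
    (isOpen_lt continuous_re continuous_const) (convex_halfSpace_re_lt c).isPreconnected
    hderiv hbound hbt hsummable hbt).congr_deriv ?_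
  rw [tsum_mul_left, zetaDepthOne]

theorem iteratedDeriv_cBeta_one_sub {α : ℂ} (hα : α.re < 1) (k : ℕ) {b : ℂ}
    (hb : b.re < 1) :
    iteratedDeriv k (fun y => cBeta (1 - α) (1 - y)) b = k ! * zetaDepthOne α b k := by
  induction k generalizing b with
  | zero =>
    simpa [zetaDepthOne] using (hasSum_poch_div_factorial_div_eq_cBeta hα hb).tsum_eq.symm
  | succ k ih =>
    have heq : iteratedDeriv k (fun y => cBeta (1 - α) (1 - y)) =ᶠ[𝓝 b]
        fun y => k ! * zetaDepthOne α y k :=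
      Filter.eventually_of_mem ((isOpen_lt continuous_re continuous_const).mem_nhds hb)
        fun y hy => ih hy
    rw [iteratedDeriv_succ, heq.deriv_eq, ((hasDerivAt_zetaDepthOne hα hb k).const_mul _).deriv,
      Nat.factorial_succ]
    push_cast
    ring

theorem hasDerivAt_Gamma_sub {d β : ℂ} (hd : ∀ m : ℕ, d - β ≠ -m) :
    HasDerivAt (fun y => Gamma (d - y)) (-(Gamma (d - β) * psiC (d - β))) β := by
  refine ((differentiableAt_Gamma _ hd).hasDerivAt.comp β
    ((hasDerivAt_id' β).const_sub d)).congr_deriv ?_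
  rw [psiC, mul_div_cancel₀ _ (Gamma_ne_zero hd)]
  ring

theorem deriv_cBeta_one_sub {a β : ℂ} (h₁ : ∀ m : ℕ, 1 - β ≠ -m)
    (h₂ : ∀ m : ℕ, a + 1 - β ≠ -m) :
    deriv (fun y => cBeta a (1 - y)) β =
      -cBeta a (1 - β) * (psiC (1 - β) - psiC (a + 1 - β)) := by
  have hfun : (fun y => cBeta a (1 - y)) =
      fun y => Gamma a * Gamma (1 - y) / Gamma (a + 1 - y) := by
    ext y; rw [cBeta, add_sub_assoc]
  rw [hfun, (((hasDerivAt_Gamma_sub h₁).const_mul (Gamma a)).fun_div (hasDerivAt_Gamma_sub h₂)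
    (Gamma_ne_zero h₂)).deriv, cBeta, ← add_sub_assoc]
  field_simp [Gamma_ne_zero h₂]
  ring

theorem ne_neg_natCast_of_re_pos {s : ℂ} (hs : 0 < s.re) (m : ℕ) : s ≠ -m := by
  rintro rfl
  simp only [neg_re, natCast_re, Left.neg_pos_iff] at hs
  linarith [m.cast_nonneg (α := ℝ)]

theorem zetaDepthOne_eq_deriv_beta (m : ℕ) (α β : ℂ) (hα : α.re < 1) (hβ : β.re < 1) :
    zetaDepthOne α β m =
        (1 / (m.factorial : ℂ)) * iteratedDeriv m (fun b : ℂ => cBeta (1 - α) (1 - b)) β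
    ∧ zetaDepthOne α β 1 =
        -cBeta (1 - α) (1 - β) * (psiC (1 - β) - psiC (2 - α - β)) := by
  refine ⟨?_, ?_⟩
  · rw [iteratedDeriv_cBeta_one_sub hα m hβ, one_div,
      inv_mul_cancel_left₀ (Nat.cast_ne_zero.2 m.factorial_ne_zero)]
  · have h₁ := ne_neg_natCast_of_re_pos (re_one_sub_pos hβ)
    have h₂ := ne_neg_natCast_of_re_pos (s := 1 - α + 1 - β)
      (by simp only [sub_re, add_re, one_re]; linarith)
    have hderiv := iteratedDeriv_cBeta_one_sub hα 1 hβ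
    rw [iteratedDeriv_one, deriv_cBeta_one_sub h₁ h₂, Nat.factorial_one, Nat.cast_one, one_mul]
      at hderiv
    rw [← hderiv]
    ring_nf
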